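/- Let 𝓛 be a nonempty convex subset of a Coxeter group W, and let Str(R) be a proper stratum (i.e., R = Sep(u) ≠ ∅ for some u ∈ W, and Str(R) is nonempty). Then Str(R) has a transmitting root: there exist w ∈ Str(R) and i ∈ I such that −w^{-1}α_i ∈ R(𝓛). -/

import Mathlib

open scoped Classical

noncomputable section

namespace BKBilliards

variable {I : Type*} [Fintype I] [DecidableEq I]
variable {M : CoxeterMatrix I} {W : Type*} [Group W]

/-- The simple root indexed by `i`, i.e. the `i`-th standard basis vector of `ℝ^I`. -/
def sroot (i : I) : I → ℝ := Pi.single i 1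

/-- The data `(ρ, B)` constitutes the standard geometric representation of the Coxeter
system `cs`, together with its induced symmetric bilinear form (with `μ = 1` on all
pairs whose Coxeter matrix entry is `∞`, encoded as `0`). -/
structure IsGeometric (cs : CoxeterSystem M W) (ρ : Representation ℝ W (I → ℝ))
    (B : LinearMap.BilinForm ℝ (I → ℝ)) : Prop where
  /-- `B(αᵢ, αᵢ') = -cos (π / m i i')` when `m i i' ≠ ∞`. -/
  form_apply_of_ne_zero : ∀ i i' : I, M i i' ≠ 0 →
    B (sroot i) (sroot i') = - Real.cos (Real.pi / (M i i' : ℝ))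
  /-- `B(αᵢ, αᵢ') = -1` when `m i i' = ∞` (encoded as `0`). -/
  form_apply_of_eq_zero : ∀ i i' : I, M i i' = 0 → B (sroot i) (sroot i') = -1
  /-- Each simple reflection acts by the reflection formula. -/
  simple_apply : ∀ (i : I) (v : I → ℝ), ρ (cs.simple i) v = v - (2 * B v (sroot i)) • sroot i

variable (ρ : Representation ℝ W (I → ℝ))

/-- The root system `Φ = {w αᵢ : w ∈ W, i ∈ I}`. -/
def Phi : Set (I → ℝ) := {v | ∃ (w : W) (i : I), v = ρ w (sroot i)}

/-- The half-space `H_β⁺ = {w ∈ W : w β ∈ Φ⁺}`: for a root `β`, membership amounts to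
`w β` being a nonnegative combination of the simple roots. -/
def Hplus (β : I → ℝ) : Set W := {w : W | 0 ≤ ρ w β}

/-- `R(𝓛) = {β ∈ Φ : 𝓛 ⊆ H_β⁺}`. -/
def RL (L : Set W) : Set (I → ℝ) := {β | β ∈ Phi ρ ∧ ∀ w ∈ L, w ∈ Hplus ρ β}

/-- `𝓛` is convex if it equals the intersection of all half-spaces containing it. -/
def IsConvex (L : Set W) : Prop := ∀ u : W, (∀ β ∈ RL ρ L, u ∈ Hplus ρ β) → u ∈ L

/-- The set of separators of `u`: `Sep(u) = {β ∈ R(𝓛) : u β ∈ Φ⁻}`. -/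
def Sep (L : Set W) (u : W) : Set (I → ℝ) := {β | β ∈ RL ρ L ∧ ρ u β ≤ 0}

variable (cs : CoxeterSystem M W)

/-- The noninvertible Bender–Knuth toggle `τᵢ` associated to the convex set `𝓛`. -/
def toggle (L : Set W) (i : I) (u : W) : W :=
  if ρ u⁻¹ (sroot i) ∈ RL ρ L then u else cs.simple i * u

/-- For a word `𝗐 = i_M ⋯ i_1` (a list whose head is `i_M`), the composition
`τ_𝗐 = τ_{i_M} ⋯ τ_{i_1}`. -/
def toggleWord (L : Set W) (l : List I) (u : W) : W :=
  l.foldr (fun i v => toggle ρ cs L i v) u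

/-- `β` dominates `β'` if `H_β⁺ ⊇ H_{β'}⁺`. -/
def Dominates (β β' : I → ℝ) : Prop := Hplus ρ β' ⊆ Hplus ρ β

/-- A small root: a positive root dominating no positive root other than itself. -/
def IsSmall (β : I → ℝ) : Prop :=
  β ∈ Phi ρ ∧ 0 ≤ β ∧ ∀ β', β' ∈ Phi ρ → 0 ≤ β' → Dominates ρ β β' → β' = β

/-- `β` is a transmitting root of the stratum `Str(R)`:
`β ∈ R(𝓛)` and `β = -w⁻¹ αᵢ` for some `w` with `Sep(w) = R` and some `i ∈ I`. -/
def IsTransmitting (L : Set W) (R : Set (I → ℝ)) (β : I → ℝ) : Prop :=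
  β ∈ RL ρ L ∧ ∃ (w : W) (i : I), Sep ρ L w = R ∧ β = - ρ w⁻¹ (sroot i)

end BKBilliards

open BKBilliards


section AuxGeometric

variable {I : Type*} [Fintype I] [DecidableEq I]
variable {M : CoxeterMatrix I} {W : Type*} [Group W]

section Geo

variable {cs : CoxeterSystem M W} {ρ : Representation ℝ W (I → ℝ)}
  {B : LinearMap.BilinForm ℝ (I → ℝ)} (hg : IsGeometric cs ρ B)

include hg

lemma B_basis_symm (i j : I) : B (sroot i) (sroot j) = B (sroot j) (sroot i) := by
  rcases eq_or_ne (M i j) 0 with h | h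
  · rw [hg.form_apply_of_eq_zero i j h, hg.form_apply_of_eq_zero j i (by rwa [M.symmetric j i])]
  · rw [hg.form_apply_of_ne_zero i j h, hg.form_apply_of_ne_zero j i (by rwa [M.symmetric j i]),
      M.symmetric j i]

lemma B_diag (i : I) : B (sroot i) (sroot i) = 1 := by
  rw [hg.form_apply_of_ne_zero i i (by simp [M.diagonal i]), M.diagonal i]
  simp

lemma B_offdiag_nonpos {i j : I} (h : i ≠ j) : B (sroot i) (sroot j) ≤ 0 := by
  rcases eq_or_ne (M i j) 0 with h0 | h0
  · rw [hg.form_apply_of_eq_zero i j h0]; norm_num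
  · rw [hg.form_apply_of_ne_zero i j h0]
    have h2 : 2 ≤ M i j := by
      rcases Nat.lt_or_ge (M i j) 2 with hl | hl
      · interval_cases hm : M i j <;> simp_all [M.off_diagonal i j h]
      · exact hl
    have : (0:ℝ) ≤ Real.cos (Real.pi / (M i j : ℝ)) := by
      apply Real.cos_nonneg_of_mem_Icc
      have hpi := Real.pi_pos
      have hc : (2:ℝ) ≤ (M i j : ℝ) := by exact_mod_cast h2
      constructor
      · have : (0:ℝ) ≤ Real.pi / (M i j : ℝ) := by positivity
        linarith
      · rw [div_le_iff₀ (by positivity)]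
        nlinarith
    linarith

omit hg in
lemma expand (v : I → ℝ) : v = ∑ i, v i • sroot i := by
  funext j
  simp [sroot, Finset.sum_apply, Pi.single_apply]

omit hg in
lemma B_expand (v w : I → ℝ) : B v w = ∑ i, ∑ j, v i * w j * B (sroot i) (sroot j) := by
  conv_lhs => rw [expand v, expand w]
  simp only [map_sum, map_smul, LinearMap.sum_apply, LinearMap.smul_apply, smul_eq_mul]
  rw [Finset.sum_comm]
  refine Finset.sum_congr rfl fun i _ => ?_
  rw [Finset.mul_sum]
  exact Finset.sum_congr rfl fun j _ => by ring

lemma B_symm (v w : I → ℝ) : B v w = B w v := by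
  rw [B_expand v w, B_expand w v, Finset.sum_comm]
  refine Finset.sum_congr rfl fun j _ => Finset.sum_congr rfl fun i _ => ?_
  rw [B_basis_symm hg]
  ring

omit hg in
lemma rho_mul (u w : W) (v : I → ℝ) : ρ (u * w) v = ρ u (ρ w v) := by
  rw [map_mul]; rfl

lemma rho_simple_self (i : I) : ρ (cs.simple i) (sroot i) = - sroot i := by
  rw [hg.simple_apply, B_diag hg]
  funext j
  simp only [Pi.sub_apply, Pi.smul_apply, Pi.neg_apply, smul_eq_mul, mul_one]
  ring

lemma B_reflection_invariant (i : I) (v w : I → ℝ) :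
    B (ρ (cs.simple i) v) (ρ (cs.simple i) w) = B v w := by
  rw [hg.simple_apply, hg.simple_apply]
  simp only [map_sub, map_smul, LinearMap.sub_apply, LinearMap.smul_apply, smul_eq_mul]
  rw [B_diag hg, B_symm hg (sroot i) w]
  ring

lemma B_invariant (w : W) (v v' : I → ℝ) : B (ρ w v) (ρ w v') = B v v' := by
  obtain ⟨ω, -, rfl⟩ := cs.exists_reduced_word' w
  induction ω with
  | nil => simp
  | cons i ω ih =>
      rw [cs.wordProd_cons, rho_mul, rho_mul,
        B_reflection_invariant hg, ih]

end Geo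

/-- Chebyshev-like sequence: coefficients of alternating products of two reflections. -/
def cheb (c : ℝ) : ℕ → ℝ
  | 0 => 0
  | 1 => 1
  | n + 2 => (-2 * c) * cheb c (n + 1) - cheb c n

@[simp] lemma cheb_zero (c : ℝ) : cheb c 0 = 0 := rfl
@[simp] lemma cheb_one (c : ℝ) : cheb c 1 = 1 := rfl
lemma cheb_two_step (c : ℝ) (n : ℕ) :
    cheb c (n + 2) = (-2 * c) * cheb c (n + 1) - cheb c n := rfl

lemma cheb_neg_one (n : ℕ) : cheb (-1) n = n := by
  induction n using Nat.twoStepInduction with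
  | zero => simp
  | one => simp
  | more n h1 h2 =>
      rw [cheb_two_step, h1, h2]
      push_cast
      ring

lemma sin_mul_cheb (θ : ℝ) (n : ℕ) :
    Real.sin θ * cheb (-Real.cos θ) n = Real.sin (n * θ) := by
  induction n using Nat.twoStepInduction with
  | zero => simp
  | one => simp
  | more n h1 h2 =>
      rw [cheb_two_step, show ((n + 2 : ℕ) : ℝ) * θ = ((n + 1 : ℕ) : ℝ) * θ + θ by push_cast; ring,
        Real.sin_add, show ((n : ℕ) : ℝ) * θ = ((n + 1 : ℕ) : ℝ) * θ - θ by push_cast; ring] at *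
      rw [Real.sin_sub] at h1
      linear_combination (2 * Real.cos θ) * h2 - h1

lemma cheb_nonneg_of_cos {m : ℕ} (hm : 2 ≤ m) {k : ℕ} (hk : k ≤ m) :
    0 ≤ cheb (-Real.cos (Real.pi / m)) k := by
  have hpi := Real.pi_pos
  have hm' : (2:ℝ) ≤ (m:ℝ) := by exact_mod_cast hm
  have hθpos : 0 < Real.pi / m := by positivity
  have hθlt : Real.pi / m < Real.pi := by
    rw [div_lt_iff₀ (by linarith)]
    nlinarith
  have hsin : 0 < Real.sin (Real.pi / m) := Real.sin_pos_of_pos_of_lt_pi hθpos hθlt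
  have h2 : 0 ≤ Real.sin (k * (Real.pi / m)) := by
    apply Real.sin_nonneg_of_nonneg_of_le_pi
    · positivity
    · have hkm : (k:ℝ) ≤ (m:ℝ) := by exact_mod_cast hk
      have h1 : (k:ℝ) * (Real.pi / m) ≤ (m:ℝ) * (Real.pi / m) :=
        mul_le_mul_of_nonneg_right hkm (le_of_lt hθpos)
      have h2 : (m:ℝ) * (Real.pi / m) = Real.pi := by field_simp
      linarith
  have := sin_mul_cheb (Real.pi / m) k
  nlinarith

section Geo2

variable {cs : CoxeterSystem M W} {ρ : Representation ℝ W (I → ℝ)}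
  {B : LinearMap.BilinForm ℝ (I → ℝ)} (hg : IsGeometric cs ρ B)

include hg

lemma cheb_B_nonneg {i j : I} (h : i ≠ j) {k : ℕ} (hk : M i j = 0 ∨ k ≤ M i j) :
    0 ≤ cheb (B (sroot i) (sroot j)) k := by
  rcases eq_or_ne (M i j) 0 with h0 | h0
  · rw [hg.form_apply_of_eq_zero i j h0, cheb_neg_one]
    positivity
  · have h2 : 2 ≤ M i j := by
      rcases Nat.lt_or_ge (M i j) 2 with hl | hl
      · interval_cases hm : M i j <;> simp_all [M.off_diagonal i j h]
      · exact hl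
    rw [hg.form_apply_of_ne_zero i j h0]
    exact cheb_nonneg_of_cos h2 (hk.resolve_left h0)

lemma alt_apply {i j : I} (h : i ≠ j) (k : ℕ) :
    ρ (cs.wordProd (CoxeterSystem.alternatingWord i j k)) (sroot i)
      = cheb (B (sroot i) (sroot j)) (k + 1) • sroot (if Even k then i else j)
        + cheb (B (sroot i) (sroot j)) k • sroot (if Even (k + 1) then i else j) := by
  induction k with
  | zero =>
      simp [show CoxeterSystem.alternatingWord i j 0 = [] from rfl]
  | succ k ih =>
      rw [CoxeterSystem.alternatingWord_succ', cs.wordProd_cons, rho_mul, ih]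
      have hk2 : (if Even (k + 2) then i else j) = (if Even k then i else j) := by
        simp [Nat.even_add_one, not_not]
      rcases Nat.even_or_odd k with hE | hO
      · have e0 : (if Even k then j else i) = j := if_pos hE
        have e1 : (if Even k then i else j) = i := if_pos hE
        have e2 : (if Even (k + 1) then i else j) = j := by
          simp [Nat.even_add_one, hE]
        rw [e0, e1, e2, hk2, e1, map_add, map_smul, map_smul, rho_simple_self hg,
          hg.simple_apply, cheb_two_step]
        module
      · have hE : ¬ Even k := Nat.not_even_iff_odd.mpr hO
        have e0 : (if Even k then j else i) = i := if_neg hE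
        have e1 : (if Even k then i else j) = j := if_neg hE
        have e2 : (if Even (k + 1) then i else j) = i := by
          simp [Nat.even_add_one, hE]
        rw [e0, e1, e2, hk2, e1, map_add, map_smul, map_smul, rho_simple_self hg,
          hg.simple_apply, B_symm hg (sroot j) (sroot i), cheb_two_step]
        module

omit hg in
lemma strip (n : ℕ) : ∀ (w : W) (i j : I), cs.length w = n → i ≠ j →
    ¬cs.IsRightDescent w i → cs.IsRightDescent w j →
    ∃ (u : W) (k : ℕ), 1 ≤ k ∧ cs.length u + k = cs.length w ∧
      w = u * cs.wordProd (CoxeterSystem.alternatingWord i j k) ∧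
      ¬cs.IsRightDescent u i ∧ ¬cs.IsRightDescent u j := by
  induction n using Nat.strong_induction_on with
  | _ n ih =>
    intro w i j hn hij hi hj
    set v := w * cs.simple j with hv_def
    have hvw : v * cs.simple j = w := by
      rw [hv_def, mul_assoc, cs.simple_mul_simple_self, mul_one]
    have hv : cs.length v + 1 = cs.length w := by
      rcases cs.length_mul_simple w j with hc | hc
      · exact absurd hc (by have := hj; unfold CoxeterSystem.IsRightDescent at this; omega)
      · exact hc
    have hvj : ¬cs.IsRightDescent v j := by
      unfold CoxeterSystem.IsRightDescent
      rw [hvw]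
      omega
    by_cases hvi : cs.IsRightDescent v i
    · obtain ⟨u, k, hk1, hlen, hdecomp, huj, hui⟩ :=
        ih (cs.length v) (by omega) v j i rfl hij.symm hvj hvi
      refine ⟨u, k + 1, by omega, by omega, ?_, hui, huj⟩
      rw [← hvw, hdecomp, CoxeterSystem.alternatingWord_succ, cs.wordProd_concat, mul_assoc]
    · refine ⟨v, 1, le_refl 1, by omega, ?_, hvi, hvj⟩
      rw [show CoxeterSystem.alternatingWord i j 1 = [j] from rfl, cs.wordProd_singleton, hvw]

omit hg in
lemma sroot_nonneg (i : I) : (0 : I → ℝ) ≤ sroot i := by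
  intro j
  simp only [sroot, Pi.zero_apply, Pi.single_apply]
  split <;> norm_num

/-- Humphreys, Theorem 5.4: if `i` is not a right descent of `w` then `w αᵢ ≥ 0`. -/
theorem rho_nonneg : ∀ (w : W) (i : I), ¬cs.IsRightDescent w i → 0 ≤ ρ w (sroot i) := by
  suffices h : ∀ (n : ℕ) (w : W) (i : I), cs.length w = n → ¬cs.IsRightDescent w i →
      0 ≤ ρ w (sroot i) by
    exact fun w i hi => h (cs.length w) w i rfl hi
  intro n
  induction n using Nat.strong_induction_on with
  | _ n ih =>
    intro w i hn hi
    rcases eq_or_ne w 1 with rfl | hw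
    · rw [map_one]
      exact sroot_nonneg i
    obtain ⟨j, hj⟩ := cs.exists_rightDescent_of_ne_one hw
    have hij : i ≠ j := by rintro rfl; exact hi hj
    obtain ⟨u, k, hk1, hlen, hdecomp, hui, huj⟩ :=
      strip (cs := cs) (cs.length w) w i j rfl hij hi hj
    -- `w * sᵢ = u * π(alternatingWord j i (k+1))` is reduced, bounding `k`
    have hwsi : cs.length (w * cs.simple i) = cs.length w + 1 := by
      rcases cs.length_mul_simple w i with hc | hc
      · exact hc
      · exact absurd (by unfold CoxeterSystem.IsRightDescent; omega) hi
    have hcond : M i j = 0 ∨ k + 1 ≤ M i j := by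
      rcases eq_or_ne (M i j) 0 with h0 | h0
      · exact Or.inl h0
      · right
        by_contra hgt
        push_neg at hgt
        have hred : cs.IsReduced (CoxeterSystem.alternatingWord j i (k + 1)) := by
          unfold CoxeterSystem.IsReduced
          rw [CoxeterSystem.length_alternatingWord]
          have hy : w * cs.simple i
              = u * cs.wordProd (CoxeterSystem.alternatingWord j i (k + 1)) := by
            rw [CoxeterSystem.alternatingWord_succ, cs.wordProd_concat, hdecomp, mul_assoc]
          have h1 : cs.length (w * cs.simple i)
              ≤ cs.length u + cs.length (cs.wordProd (CoxeterSystem.alternatingWord j i (k+1))) := by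
            rw [hy]; exact cs.length_mul_le _ _
          have h2 : cs.length (cs.wordProd (CoxeterSystem.alternatingWord j i (k+1))) ≤ k + 1 := by
            have := cs.length_wordProd_le (CoxeterSystem.alternatingWord j i (k+1))
            rwa [CoxeterSystem.length_alternatingWord] at this
          omega
        exact cs.not_isReduced_alternatingWord j i
          (by rw [M.symmetric]; exact h0) (by rw [M.symmetric]; omega) hred
    have hcondk : M i j = 0 ∨ k ≤ M i j := hcond.imp id (by omega)
    have hu_i : 0 ≤ ρ u (sroot i) := ih (cs.length u) (by omega) u i rfl hui
    have hu_j : 0 ≤ ρ u (sroot j) := ih (cs.length u) (by omega) u j rfl huj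
    rw [hdecomp, rho_mul, alt_apply hg hij k, map_add, map_smul, map_smul]
    have h1 : 0 ≤ ρ u (sroot (if Even k then i else j)) := by
      split <;> assumption
    have h2 : 0 ≤ ρ u (sroot (if Even (k + 1) then i else j)) := by
      split <;> assumption
    exact add_nonneg (smul_nonneg (cheb_B_nonneg hg hij hcond) h1)
      (smul_nonneg (cheb_B_nonneg hg hij hcondk) h2)

end Geo2

section Cor

variable {cs : CoxeterSystem M W} {ρ : Representation ℝ W (I → ℝ)}
  {B : LinearMap.BilinForm ℝ (I → ℝ)} (hg : IsGeometric cs ρ B)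

include hg

omit hg in
lemma rho_rho_inv (w : W) (v : I → ℝ) : ρ w⁻¹ (ρ w v) = v := by
  rw [← rho_mul, inv_mul_cancel, map_one]
  rfl

omit hg in
lemma mem_Phi_rho {β : I → ℝ} (hβ : β ∈ Phi ρ) (w : W) : ρ w β ∈ Phi ρ := by
  obtain ⟨w', i', rfl⟩ := hβ
  exact ⟨w * w', i', (rho_mul w w' _).symm⟩

omit hg in
lemma root_ne_zero {β : I → ℝ} (hβ : β ∈ Phi ρ) : β ≠ 0 := by
  obtain ⟨w, i, rfl⟩ := hβ
  intro h0
  have h1 : sroot i = (0 : I → ℝ) := by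
    have h2 := congrArg (ρ w⁻¹) h0
    rwa [rho_rho_inv, map_zero] at h2
  have h3 := congrFun h1 i
  simp [sroot] at h3

lemma neg_mem_Phi {β : I → ℝ} (hβ : β ∈ Phi ρ) : -β ∈ Phi ρ := by
  obtain ⟨w, i, rfl⟩ := hβ
  exact ⟨w * cs.simple i, i, by rw [rho_mul, rho_simple_self hg, map_neg]⟩

lemma root_dichotomy {β : I → ℝ} (hβ : β ∈ Phi ρ) : 0 ≤ β ∨ β ≤ 0 := by
  obtain ⟨w, i, rfl⟩ := hβ
  by_cases hd : cs.IsRightDescent w i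
  · right
    have hww : (w * cs.simple i) * cs.simple i = w := by
      rw [mul_assoc, cs.simple_mul_simple_self, mul_one]
    have hnd : ¬ cs.IsRightDescent (w * cs.simple i) i := by
      unfold CoxeterSystem.IsRightDescent at *
      rw [hww]
      omega
    have h1 : 0 ≤ ρ (w * cs.simple i) (sroot i) := rho_nonneg hg _ i hnd
    rw [rho_mul, rho_simple_self hg, map_neg] at h1
    exact neg_nonneg.mp h1
  · left
    exact rho_nonneg hg w i hd

lemma B_root_self {β : I → ℝ} (hβ : β ∈ Phi ρ) : B β β = 1 := by
  obtain ⟨w, i, rfl⟩ := hβ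
  rw [B_invariant hg, B_diag hg]

lemma eq_sroot_of_flip {β : I → ℝ} (hβ : β ∈ Phi ρ) (hpos : 0 ≤ β) {i : I}
    (hneg : ¬ 0 ≤ ρ (cs.simple i) β) : β = sroot i := by
  have hmem : ρ (cs.simple i) β ∈ Phi ρ := mem_Phi_rho hβ _
  have hle : ρ (cs.simple i) β ≤ 0 := (root_dichotomy hg hmem).resolve_left hneg
  rw [hg.simple_apply] at hle
  have hcoord : ∀ j, j ≠ i → β j = 0 := by
    intro j hj
    have h1 := hle j
    simp only [Pi.sub_apply, Pi.smul_apply, Pi.zero_apply, smul_eq_mul, sroot,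
      Pi.single_apply, if_neg hj, mul_zero, sub_zero] at h1
    exact le_antisymm h1 (hpos j)
  have hβ_eq : β = β i • sroot i := by
    funext j
    rcases eq_or_ne j i with rfl | hj
    · simp [sroot, Pi.single_apply]
    · simp [sroot, Pi.single_apply, hj, hcoord j hj]
  have hB : B β β = (β i) ^ 2 := by
    conv_lhs => rw [hβ_eq]
    simp only [map_smul, LinearMap.map_smul₂, LinearMap.smul_apply, smul_eq_mul, B_diag hg]
    ring
  have h1 : (β i) ^ 2 = 1 := by rw [← hB, B_root_self hg hβ]
  have h2 : 0 ≤ β i := hpos i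
  have h3 : β i = 1 := by
    have h4 : (β i - 1) * (β i + 1) = 0 := by linear_combination h1
    clear hneg hle hpos hmem hβ hβ_eq
    rcases mul_eq_zero.mp h4 with h5 | h5
    · linarith
    · linarith
  rw [hβ_eq, h3, one_smul]

end Cor

lemma exists_boundary (P : ℕ → Prop) : ∀ n : ℕ, ¬ P 0 → P n → ∃ t, t < n ∧ P (t + 1) ∧ ¬ P t := by
  intro n
  induction n with
  | zero => intro h0 hn; exact absurd hn h0
  | succ n ih =>
      intro h0 hn
      by_cases hPn : P n
      · obtain ⟨t, ht, h1, h2⟩ := ih h0 hPn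
        exact ⟨t, by omega, h1, h2⟩
      · exact ⟨n, by omega, hn, hPn⟩

end AuxGeometric

/-- Every proper stratum has a transmitting root: if `Sep(u₀) ≠ ∅`, then
there are `w` with `Sep(w) = Sep(u₀)` and `i ∈ I` such that `-w⁻¹ αᵢ ∈ R(𝓛)`. -/
theorem exists_transmitting_root
    {I : Type*} [Fintype I] [DecidableEq I] {M : CoxeterMatrix I} {W : Type*} [Group W]
    (cs : CoxeterSystem M W) (ρ : Representation ℝ W (I → ℝ))
    (B : LinearMap.BilinForm ℝ (I → ℝ)) (hgeom : IsGeometric cs ρ B)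
    (L : Set W) (hL : L.Nonempty) (hconv : IsConvex ρ L)
    (u₀ : W) (hproper : Sep ρ L u₀ ≠ ∅) :
    ∃ (w : W) (i : I), Sep ρ L w = Sep ρ L u₀ ∧ - ρ w⁻¹ (sroot i) ∈ RL ρ L := by
  classical
  obtain ⟨β₀, hβ₀⟩ := Set.nonempty_iff_ne_empty.mpr hproper
  obtain ⟨v, hv⟩ := hL
  obtain ⟨ω, hred, hgw⟩ := cs.exists_reduced_word' (v * u₀⁻¹)
  have h_end : cs.wordProd (ω.drop ω.length) * u₀ = u₀ := by
    rw [List.drop_length, cs.wordProd_nil, one_mul]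
  have h_start : cs.wordProd (ω.drop 0) * u₀ = v := by
    rw [List.drop_zero, ← hgw, inv_mul_cancel_right]
  have hP0 : ¬ (Sep ρ L (cs.wordProd (ω.drop 0) * u₀) = Sep ρ L u₀) := by
    rw [h_start]
    intro hEq
    have hβ₀v : β₀ ∈ Sep ρ L v := hEq ▸ hβ₀
    have h1 : 0 ≤ ρ v β₀ := hβ₀.1.2 v hv
    have h2 : ρ v β₀ ≤ 0 := hβ₀v.2
    exact root_ne_zero (mem_Phi_rho hβ₀.1.1 v) (le_antisymm h2 h1)
  have hPn : Sep ρ L (cs.wordProd (ω.drop ω.length) * u₀) = Sep ρ L u₀ := by rw [h_end]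
  obtain ⟨t, htn, hPt1, hPt⟩ :=
    exists_boundary (fun t => Sep ρ L (cs.wordProd (ω.drop t) * u₀) = Sep ρ L u₀)
      ω.length hP0 hPn
  set u : W := cs.wordProd (ω.drop (t + 1)) * u₀ with hu
  set a : I := ω[t]'htn with ha
  have hSepu : Sep ρ L u = Sep ρ L u₀ := hPt1
  have hstep : cs.wordProd (ω.drop t) * u₀ = cs.simple a * u := by
    rw [hu, List.drop_eq_getElem_cons htn, cs.wordProd_cons, mul_assoc]
  have hne : Sep ρ L (cs.simple a * u) ≠ Sep ρ L u₀ := by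
    rw [← hstep]
    exact hPt
  have hdiff : ∃ γ, (γ ∈ Sep ρ L (cs.simple a * u) ∧ γ ∉ Sep ρ L u) ∨
      (γ ∈ Sep ρ L u ∧ γ ∉ Sep ρ L (cs.simple a * u)) := by
    by_contra hno
    push_neg at hno
    apply hne
    rw [← hSepu] at hne ⊢
    ext γ
    exact ⟨fun hx => (hno γ).1 hx, fun hx => (hno γ).2 hx⟩
  obtain ⟨γ, hcase⟩ := hdiff
  rcases hcase with ⟨hγin, hγout⟩ | ⟨hγin, hγout⟩
  · -- a root entered `Sep` going from `u` towards `𝓛`: contradiction with reducedness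
    exfalso
    have hγRL : γ ∈ RL ρ L := hγin.1
    have hγPhi : γ ∈ Phi ρ := hγRL.1
    have hnotle : ¬ ρ u γ ≤ 0 := fun hle => hγout ⟨hγRL, hle⟩
    have hpos : 0 ≤ ρ u γ := (root_dichotomy hgeom (mem_Phi_rho hγPhi u)).resolve_right hnotle
    have hle2 : ρ (cs.simple a) (ρ u γ) ≤ 0 := by
      rw [← rho_mul]
      exact hγin.2
    have hmem2 : ρ (cs.simple a) (ρ u γ) ∈ Phi ρ := by
      rw [← rho_mul]
      exact mem_Phi_rho hγPhi _
    have hflip : ¬ 0 ≤ ρ (cs.simple a) (ρ u γ) := by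
      intro h0
      exact root_ne_zero hmem2 (le_antisymm hle2 h0)
    have hδ : ρ u γ = sroot a := eq_sroot_of_flip hgeom (mem_Phi_rho hγPhi u) hpos hflip
    have hvdecomp : v = cs.wordProd (ω.take t) * (cs.simple a * u) := by
      rw [← hstep, ← mul_assoc, ← cs.wordProd_append, List.take_append_drop, ← hgw,
        inv_mul_cancel_right]
    have hvγ : ρ v γ = - ρ (cs.wordProd (ω.take t)) (sroot a) := by
      rw [hvdecomp, rho_mul, rho_mul, hδ, rho_simple_self hgeom, map_neg]
    have hq : ¬ cs.IsRightDescent (cs.wordProd (ω.take t)) a := by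
      have hr1 : cs.length (cs.wordProd (ω.take t)) = t := by
        have h5 := CoxeterSystem.IsReduced.take hred t
        unfold CoxeterSystem.IsReduced at h5
        rw [h5, List.length_take]
        omega
      have htake : ω.take (t + 1) = ω.take t ++ [a] := by
        rw [List.take_succ]
        simp [ha, List.getElem?_eq_getElem htn]
      have hr2 : cs.length (cs.wordProd (ω.take t) * cs.simple a) = t + 1 := by
        rw [← cs.wordProd_singleton, ← cs.wordProd_append, ← htake]
        have h5 := CoxeterSystem.IsReduced.take hred (t + 1)
        unfold CoxeterSystem.IsReduced at h5
        rw [h5, List.length_take]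
        omega
      unfold CoxeterSystem.IsRightDescent
      omega
    have h0 : 0 ≤ ρ (cs.wordProd (ω.take t)) (sroot a) := rho_nonneg hgeom _ a hq
    have hvle : ρ v γ ≤ 0 := by
      rw [hvγ]
      exact neg_nonpos.mpr h0
    have hvge : 0 ≤ ρ v γ := hγRL.2 v hv
    exact root_ne_zero (mem_Phi_rho hγPhi v) (le_antisymm hvle hvge)
  · -- a root left `Sep` going from `u` towards `𝓛`: it is a transmitting root
    have hγRL : γ ∈ RL ρ L := hγin.1
    have hγPhi : γ ∈ Phi ρ := hγRL.1
    have hle : ρ u γ ≤ 0 := hγin.2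
    have hnotle : ¬ ρ (cs.simple a) (ρ u γ) ≤ 0 := by
      rw [← rho_mul]
      exact fun h => hγout ⟨hγRL, h⟩
    have hδPhi : -ρ u γ ∈ Phi ρ := neg_mem_Phi hgeom (mem_Phi_rho hγPhi u)
    have hδpos : 0 ≤ -ρ u γ := neg_nonneg.mpr hle
    have hflip : ¬ 0 ≤ ρ (cs.simple a) (-ρ u γ) := by
      rw [map_neg]
      intro h0
      exact hnotle (neg_nonneg.mp h0)
    have hδ : -ρ u γ = sroot a := eq_sroot_of_flip hgeom hδPhi hδpos hflip
    have hγeq : γ = - ρ u⁻¹ (sroot a) := by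
      rw [← hδ, map_neg, neg_neg, rho_rho_inv]
    exact ⟨u, a, hSepu, by rw [← hγeq]; exact hγRL⟩
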